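/- Under the axioms of the quantum representation theorem, likelihood equivalence exactly characterizes equal weight: E|M ≃ F|N if and only if W_M(E) = W_N(F). -/
import Mathlib


/-- A quantum measurement: a finite outcome set with an additive,
normalized, nonnegative weight function on events (subsets of outcomes). -/
structure Measurement where
  S : Finset ℕ
  W : Finset ℕ → ℝ
  nonneg : ∀ E, 0 ≤ W E
  emptyW : W ∅ = 0
  totalW : W S = 1
  addW : ∀ E F : Finset ℕ, E ⊆ S → F ⊆ S → Disjoint E F → W (E ∪ F) = W E + W F

/-- A likelihood ordering on event–measurement pairs. -/
abbrev LOrder := (Finset ℕ × Measurement) → (Finset ℕ × Measurement) → Prop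

/-- E|M ≃ F|N : both directions of the likelihood ordering hold. -/
def lequiv (R : LOrder) (a b : Finset ℕ × Measurement) : Prop := R a b ∧ R b a

/-- E is null with respect to M. -/
def IsNull (R : LOrder) (E : Finset ℕ) (M : Measurement) : Prop := lequiv R (E, M) (∅, M)

/-- Transitivity axiom. -/
def TransAx (R : LOrder) : Prop := ∀ a b c, R a b → R b c → R a c

/-- Dominance axiom. -/
def DominanceAx (R : LOrder) : Prop :=
  ∀ (M : Measurement) (E F : Finset ℕ), E ⊆ F → F ⊆ M.S →
    R (F, M) (E, M) ∧ (lequiv R (F, M) (E, M) ↔ IsNull R (F \ E) M)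

/-- Separation axiom: some event is not null. -/
def SeparationAx (R : LOrder) : Prop :=
  ∃ (E : Finset ℕ) (M : Measurement), E ⊆ M.S ∧ ¬ IsNull R E M

/-- Equivalence axiom: equal weight implies equal likelihood. -/
def EquivalenceAx (R : LOrder) : Prop :=
  ∀ (M N : Measurement) (E F : Finset ℕ), E ⊆ M.S → F ⊆ N.S →
    M.W E = N.W F → lequiv R (E, M) (F, N)

/-- Weight-richness: every finite list of positive reals summing to 1 is
realized as the singleton-outcome weights of some measurement. -/
def Rich : Prop :=
  ∀ (n : ℕ) (w : Fin n → ℝ), (∀ i, 0 < w i) → (∑ i, w i) = 1 →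
    ∃ (M : Measurement) (e : Fin n ↪ ℕ),
      M.S = Finset.univ.map e ∧ ∀ i, M.W {e i} = w i

/-- `Pr` represents the likelihood ordering `R`. -/
def Represents (R : LOrder) (Pr : Finset ℕ × Measurement → ℝ) : Prop :=
  (∀ M : Measurement, Pr (∅, M) = 0) ∧
  (∀ M : Measurement, Pr (M.S, M) = 1) ∧
  (∀ (M : Measurement) (E F : Finset ℕ), E ⊆ M.S → F ⊆ M.S → Disjoint E F →
      Pr (E ∪ F, M) = Pr (E, M) + Pr (F, M)) ∧
  (∀ a b : Finset ℕ × Measurement, a.1 ⊆ a.2.S → b.1 ⊆ b.2.S →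
      (Pr a ≥ Pr b ↔ R a b))

-- auxiliary lemmas
lemma W_le_one (M : Measurement) (E : Finset ℕ) (h : E ⊆ M.S) : M.W E ≤ 1 := by
  have h2 : M.W (E ∪ (M.S \ E)) = M.W E + M.W (M.S \ E) :=
    M.addW _ _ h Finset.sdiff_subset Finset.disjoint_sdiff
  rw [Finset.union_sdiff_of_subset h, M.totalW] at h2
  nlinarith [M.nonneg (M.S \ E)]

section
variable {R : LOrder}

lemma leq_trans (hT : TransAx R) {a b c} (h1 : lequiv R a b) (h2 : lequiv R b c) :
    lequiv R a c := ⟨hT _ _ _ h1.1 h2.1, hT _ _ _ h2.2 h1.2⟩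

lemma leq_symm {a b} (h : lequiv R a b) : lequiv R b a := ⟨h.2, h.1⟩

def NullW (R : LOrder) (c : ℝ) : Prop :=
  ∀ (Q : Measurement) (G : Finset ℕ), G ⊆ Q.S → Q.W G = c → IsNull R G Q

lemma nullW_of (hT : TransAx R) (hE : EquivalenceAx R) {Q : Measurement} {G : Finset ℕ}
    (hG : G ⊆ Q.S) (hn : IsNull R G Q) : NullW R (Q.W G) := by
  intro Q' G' h' hw
  have h1 : lequiv R (G', Q') (G, Q) := hE _ _ _ _ h' hG (by rw [hw])
  have h2 : lequiv R ((∅ : Finset ℕ), Q) ((∅ : Finset ℕ), Q') :=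
    hE _ _ _ _ (Finset.empty_subset _) (Finset.empty_subset _) (by rw [Q.emptyW, Q'.emptyW])
  exact leq_trans hT (leq_trans hT h1 hn) h2

lemma nullW_zero (hE : EquivalenceAx R) : NullW R 0 := by
  intro Q G h hw
  exact hE _ _ _ _ h (Finset.empty_subset _) (by rw [hw, Q.emptyW])

lemma null_subset (hT : TransAx R) (hD : DominanceAx R) {Q : Measurement} {A B : Finset ℕ}
    (hAB : A ⊆ B) (hBS : B ⊆ Q.S) (hB : IsNull R B Q) : IsNull R A Q := by
  have h1 := (hD Q A B hAB hBS).1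
  have h2 := (hD Q ∅ A (Finset.empty_subset _) (hAB.trans hBS)).1
  exact ⟨h2, hT _ _ _ hB.2 h1⟩

lemma null_union (hT : TransAx R) (hD : DominanceAx R) {Q : Measurement} {A B : Finset ℕ}
    (hAS : A ⊆ Q.S) (hBS : B ⊆ Q.S) (hdis : Disjoint A B)
    (hA : IsNull R A Q) (hB : IsNull R B Q) : IsNull R (A ∪ B) Q := by
  have hsub : A ⊆ A ∪ B := Finset.subset_union_left
  have hUS : A ∪ B ⊆ Q.S := Finset.union_subset hAS hBS
  have hiff := (hD Q A (A ∪ B) hsub hUS).2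
  have hsd : (A ∪ B) \ A = B := Finset.union_sdiff_cancel_left hdis
  have h1 : lequiv R (A ∪ B, Q) (A, Q) := hiff.mpr (by rw [hsd]; exact hB)
  exact leq_trans hT h1 hA

-- key construction: events of prescribed weights a ⊆ b inside one measurement
lemma exists_pair (hR : Rich) {a b : ℝ} (ha : 0 ≤ a) (hab : a < b) (hb : b ≤ 1) :
    ∃ (Q : Measurement) (A B : Finset ℕ), A ⊆ B ∧ B ⊆ Q.S ∧ Q.W A = a ∧ Q.W B = b := by
  rcases eq_or_lt_of_le ha with ha0 | hapos
  · -- a = 0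
    rcases eq_or_lt_of_le hb with hb1 | hblt
    · -- b = 1
      obtain ⟨Q, e, hSQ, hw⟩ := hR 1 ![1] (by intro i; fin_cases i <;> norm_num)
        (by simp)
      exact ⟨Q, ∅, Q.S, Finset.empty_subset _, subset_rfl, by rw [Q.emptyW, ← ha0],
        by rw [Q.totalW, hb1]⟩
    · -- b < 1
      obtain ⟨Q, e, hSQ, hw⟩ := hR 2 ![b, 1 - b]
        (by intro i; fin_cases i <;> simp <;> linarith)
        (by simp [Fin.sum_univ_two])
      have hB : ({e 0} : Finset ℕ) ⊆ Q.S := by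
        rw [hSQ]; simp [Finset.singleton_subset_iff]
      exact ⟨Q, ∅, {e 0}, Finset.empty_subset _, hB, by rw [Q.emptyW, ← ha0],
        by rw [hw 0]; simp⟩
  · rcases eq_or_lt_of_le hb with hb1 | hblt
    · -- b = 1, a > 0
      obtain ⟨Q, e, hSQ, hw⟩ := hR 2 ![a, 1 - a]
        (by intro i; fin_cases i <;> simp <;> linarith)
        (by simp [Fin.sum_univ_two])
      have hA : ({e 0} : Finset ℕ) ⊆ Q.S := by
        rw [hSQ]; simp [Finset.singleton_subset_iff]
      exact ⟨Q, {e 0}, Q.S, hA, subset_rfl, by rw [hw 0]; simp, by rw [Q.totalW, hb1]⟩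
    · -- 0 < a < b < 1
      obtain ⟨Q, e, hSQ, hw⟩ := hR 3 ![a, b - a, 1 - b]
        (by intro i; fin_cases i <;> simp <;> linarith)
        (by simp [Fin.sum_univ_three])
      have hA : ({e 0} : Finset ℕ) ⊆ Q.S := by
        rw [hSQ]; simp [Finset.singleton_subset_iff]
      have hA1 : ({e 1} : Finset ℕ) ⊆ Q.S := by
        rw [hSQ]; simp [Finset.singleton_subset_iff]
      have hne : e 0 ≠ e 1 := fun h => by simpa using e.injective h
      have hdis : Disjoint ({e 0} : Finset ℕ) {e 1} := by
        simp [Finset.disjoint_singleton, hne]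
      have hWB : Q.W ({e 0} ∪ {e 1}) = b := by
        rw [Q.addW _ _ hA hA1 hdis, hw 0, hw 1]; simp
      exact ⟨Q, {e 0}, {e 0} ∪ {e 1}, Finset.subset_union_left,
        Finset.union_subset hA hA1, by rw [hw 0]; simp, hWB⟩

lemma nullW_mono (hT : TransAx R) (hD : DominanceAx R) (hE : EquivalenceAx R) (hR : Rich)
    {c d : ℝ} (hc : NullW R c) (hd0 : 0 ≤ d) (hdc : d ≤ c) (hc1 : c ≤ 1) : NullW R d := by
  rcases eq_or_lt_of_le hdc with h | h
  · rwa [h]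
  · obtain ⟨Q, A, B, hAB, hBS, hWA, hWB⟩ := exists_pair hR hd0 h hc1
    have hB : IsNull R B Q := hc Q B hBS hWB
    have hA : IsNull R A Q := null_subset hT hD hAB hBS hB
    have := nullW_of hT hE (hAB.trans hBS) hA
    rwa [hWA] at this

lemma nullW_add (hT : TransAx R) (hD : DominanceAx R) (hE : EquivalenceAx R) (hR : Rich)
    {c d : ℝ} (hc : NullW R c) (hd : NullW R d) (hc0 : 0 ≤ c) (hd0 : 0 < d)
    (hcd : c + d ≤ 1) : NullW R (c + d) := by
  obtain ⟨Q, A, B, hAB, hBS, hWA, hWB⟩ := exists_pair hR hc0 (by linarith) hcd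
  have hAS : A ⊆ Q.S := hAB.trans hBS
  have hdiffS : B \ A ⊆ Q.S := Finset.sdiff_subset.trans hBS
  have hdis : Disjoint A (B \ A) := Finset.disjoint_sdiff
  have hUn : A ∪ (B \ A) = B := Finset.union_sdiff_of_subset hAB
  have hWdiff : Q.W (B \ A) = d := by
    have := Q.addW A (B \ A) hAS hdiffS hdis
    rw [hUn, hWA, hWB] at this; linarith
  have hA : IsNull R A Q := hc Q A hAS hWA
  have hBd : IsNull R (B \ A) Q := hd Q (B \ A) hdiffS hWdiff
  have hB : IsNull R B Q := by
    rw [← hUn]; exact null_union hT hD hAS hdiffS hdis hA hBd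
  have := nullW_of hT hE hBS hB
  rwa [hWB] at this

lemma nullW_pos_false (hT : TransAx R) (hD : DominanceAx R) (hSep : SeparationAx R)
    (hE : EquivalenceAx R) (hR : Rich) {c : ℝ} (hc0 : 0 < c) (hc1 : c ≤ 1)
    (hc : NullW R c) : False := by
  obtain ⟨E₀, M₀, hE₀S, hE₀⟩ := hSep
  set c₀ := M₀.W E₀ with hc₀def
  have hc₀pos : 0 < c₀ := by
    rcases eq_or_lt_of_le (M₀.nonneg E₀) with h | h
    · exact absurd (nullW_zero hE M₀ E₀ hE₀S h.symm) hE₀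
    · exact h
  have hc₀1 : c₀ ≤ 1 := W_le_one M₀ E₀ hE₀S
  obtain ⟨n, hn⟩ := exists_nat_ge (c₀ / c)
  set m : ℕ := max n 1 with hm
  have hm1 : 1 ≤ m := le_max_right n 1
  have hmpos : (0 : ℝ) < m := by exact_mod_cast hm1
  set u : ℝ := c₀ / m with hu
  have hupos : 0 < u := div_pos hc₀pos hmpos
  have huc : u ≤ c := by
    rw [hu, div_le_iff₀ hmpos]
    have : c₀ / c ≤ (m : ℝ) := le_trans hn (by exact_mod_cast le_max_left n 1)
    calc c₀ = (c₀ / c) * c := by field_simp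
      _ ≤ (m : ℝ) * c := by nlinarith
      _ = c * m := by ring
  have hmu : (m : ℝ) * u = c₀ := by rw [hu]; field_simp
  have hNu : NullW R u := nullW_mono hT hD hE hR hc (le_of_lt hupos) huc hc1
  have key : ∀ k : ℕ, k ≤ m → NullW R (k * u) := by
    intro k
    induction k with
    | zero => intro _; simpa using nullW_zero hE
    | succ k ih =>
      intro hk
      have hk' : k ≤ m := Nat.le_of_succ_le hk
      have hNk := ih hk'
      have hle : ((k : ℝ) + 1) * u ≤ c₀ := by
        rw [← hmu]
        have : ((k : ℝ) + 1) ≤ (m : ℝ) := by exact_mod_cast hk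
        nlinarith
      have := nullW_add hT hD hE hR hNk hNu
        (by positivity) hupos (by linarith)
      have hcast : ((k + 1 : ℕ) : ℝ) * u = (k : ℝ) * u + u := by push_cast; ring
      rw [hcast]
      exact this
  have hNc₀ : NullW R c₀ := by
    have := key m le_rfl
    rwa [hmu] at this
  exact hE₀ (hNc₀ M₀ E₀ hE₀S rfl)

lemma lt_false (hT : TransAx R) (hD : DominanceAx R) (hSep : SeparationAx R)
    (hE : EquivalenceAx R) (hR : Rich) {M N : Measurement} {E F : Finset ℕ}
    (hEM : E ⊆ M.S) (hFN : F ⊆ N.S) (h : lequiv R (E, M) (F, N))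
    (hlt : M.W E < N.W F) : False := by
  obtain ⟨Q, A, B, hAB, hBS, hWA, hWB⟩ :=
    exists_pair hR (M.nonneg E) hlt (W_le_one N F hFN)
  have hAS : A ⊆ Q.S := hAB.trans hBS
  have h1 : lequiv R (A, Q) (E, M) := hE _ _ _ _ hAS hEM (by rw [hWA])
  have h2 : lequiv R (F, N) (B, Q) := hE _ _ _ _ hFN hBS (by rw [hWB])
  have h3 : lequiv R (B, Q) (A, Q) := leq_symm (leq_trans hT (leq_trans hT h1 h) h2)
  have hnull : IsNull R (B \ A) Q := (hD Q A B hAB hBS).2.mp h3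
  have hWdiff : Q.W (B \ A) = N.W F - M.W E := by
    have := Q.addW A (B \ A) hAS (Finset.sdiff_subset.trans hBS) Finset.disjoint_sdiff
    rw [Finset.union_sdiff_of_subset hAB, hWA, hWB] at this; linarith
  have hN : NullW R (N.W F - M.W E) := by
    have := nullW_of hT hE (Finset.sdiff_subset.trans hBS) hnull
    rwa [hWdiff] at this
  exact nullW_pos_false hT hD hSep hE hR (by linarith)
    (by nlinarith [M.nonneg E, W_le_one N F hFN]) hN

end

/-- Likelihood equivalence exactly characterizes equal weight. -/
theorem stmt17 (R : LOrder) (hT : TransAx R) (hD : DominanceAx R)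
    (hS : SeparationAx R) (hE : EquivalenceAx R) (hR : Rich)
    (M N : Measurement) (E F : Finset ℕ) (hEM : E ⊆ M.S) (hFN : F ⊆ N.S) :
    lequiv R (E, M) (F, N) ↔ M.W E = N.W F := by
  constructor
  · intro h
    rcases lt_trichotomy (M.W E) (N.W F) with hlt | heq | hgt
    · exact absurd (lt_false hT hD hS hE hR hEM hFN h hlt) not_false
    · exact heq
    · exact absurd (lt_false hT hD hS hE hR hFN hEM (leq_symm h) hgt) not_false
  · exact fun h => hE M N E F hEM hFN h
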